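/- arXiv:1703.04265 — 2 statements merged into one kernel-verified Lean document; each statement's English description precedes it below -/
import Mathlib

section
/- Let E be a finite-dimensional real inner product space, let A* : E → ℝ be a convex differentiable function with gradient map Λ := ∇A*, let η ∈ E, let (g_t)_{t≥1} be vectors in E and (β_t)_{t≥1} positive reals. Suppose (μ_t)_{t≥1} in E satisfies Λ(μ_1) = η and, for every t ≥ 1, μ_{t+1} is a global maximizer over E of μ ↦ ⟨μ, g_t + η − Λ(μ_t)⟩ − (1/β_t) B_{A*}(μ‖μ_t). Define λ̃_0 := 0 and λ̃_t := (1 − β_t) λ̃_{t−1} + β_t g_t for t ≥ 1. Then Λ(μ_{t+1}) = λ̃_t + η for every t ≥ 1. -/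
/-!
At a maximizer `μ_{t+1}` the gradient of the mirror-step objective vanishes; since the gradient of
`B_{A*}(·‖μ_t)` at `μ` is `Λ(μ) − Λ(μ_t)`, this says `Λ(μ_{t+1}) = Λ(μ_t) + β_t (g_t + η − Λ(μ_t))`.
Hence `Λ(μ_{t+1}) − η = (1 − β_t)(Λ(μ_t) − η) + β_t g_t`, the recursion of `λ̃_t`, started from
`Λ(μ_1) − η = 0 = λ̃_0`.
-/

open RealInnerProductSpace InnerProductSpace

section MirrorStep

variable {E : Type*} [NormedAddCommGroup E] [InnerProductSpace ℝ E]

def bregmanDiv (f : E → ℝ) (f' : E → E) (x y : E) : ℝ :=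
  f x - f y - ⟪x - y, f' y⟫

theorem eq_add_of_relaxation {u lam g : ℕ → E} {β : ℕ → ℝ} {η : E} (hu1 : u 1 = η)
    (hu : ∀ t, 1 ≤ t → u (t + 1) = u t + β t • (g t + η - u t)) (h0 : lam 0 = 0)
    (hlam : ∀ t, 1 ≤ t → lam t = (1 - β t) • lam (t - 1) + β t • g t) :
    ∀ t, 1 ≤ t → u (t + 1) = lam t + η := by
  intro t ht
  induction t, ht using Nat.le_induction with
  | base => rw [hu 1 le_rfl, hlam 1 le_rfl, hu1, h0]; module
  | succ n hn ih =>
    rw [hu (n + 1) (by omega), hlam (n + 1) (by omega), ih, Nat.add_sub_cancel]; module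

section Gradient

variable [CompleteSpace E] {f g : E → ℝ} {f' g' x : E}

theorem HasGradientAt.sub (hf : HasGradientAt f f' x) (hg : HasGradientAt g g' x) :
    HasGradientAt (fun m => f m - g m) (f' - g') x := by
  rw [hasGradientAt_iff_hasFDerivAt, map_sub]
  exact HasFDerivAt.sub hf hg

theorem HasGradientAt.sub_const (hf : HasGradientAt f f' x) (c : ℝ) :
    HasGradientAt (fun m => f m - c) f' x :=
  HasFDerivAt.sub_const c hf

theorem HasGradientAt.const_mul (hf : HasGradientAt f f' x) (c : ℝ) :
    HasGradientAt (fun m => c * f m) (c • f') x := by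
  rw [hasGradientAt_iff_hasFDerivAt, map_smulₛₗ]
  exact HasFDerivAt.const_mul hf c

theorem hasGradientAt_inner_sub_left (c y x : E) :
    HasGradientAt (fun m => ⟪m - y, c⟫) c x := by
  rw [hasGradientAt_iff_hasFDerivAt]
  have := ((toDual ℝ E c).hasFDerivAt (x := x - y)).comp x ((hasFDerivAt_id x).sub_const y)
  simpa [Function.comp_def, real_inner_comm] using this

theorem hasGradientAt_inner_left (c x : E) : HasGradientAt (fun m => ⟪m, c⟫) c x := by
  simpa using hasGradientAt_inner_sub_left c 0 x

theorem IsLocalMax.hasGradientAt_eq_zero (h : IsLocalMax f x) (hf : HasGradientAt f f' x) :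
    f' = 0 := by
  simpa using h.hasFDerivAt_eq_zero hf

variable {A : E → ℝ} {Λ : E → E}

theorem HasGradientAt.bregmanDiv_left (hA : HasGradientAt A (Λ x) x) (y : E) :
    HasGradientAt (fun m => bregmanDiv A Λ m y) (Λ x - Λ y) x :=
  (hA.sub_const (A y)).sub (hasGradientAt_inner_sub_left (Λ y) y x)

theorem dual_eq_add_smul_of_isLocalMax_mirrorStep {y c : E} {b : ℝ}
    (hA : HasGradientAt A (Λ x) x) (hb : b ≠ 0)
    (hmax : IsLocalMax (fun m => ⟪m, c⟫ - (1 / b) * bregmanDiv A Λ m y) x) :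
    Λ x = Λ y + b • c := by
  have hcrit : c - (1 / b) • (Λ x - Λ y) = 0 :=
    hmax.hasGradientAt_eq_zero
      ((hasGradientAt_inner_left c x).sub ((hA.bregmanDiv_left y).const_mul (1 / b)))
  rw [sub_eq_zero] at hcrit
  rw [hcrit, smul_smul, mul_one_div_cancel hb, one_smul, add_sub_cancel]

end Gradient

end MirrorStep

theorem cvi_mirror_steps_natural_params_general
    {E : Type*} [NormedAddCommGroup E] [InnerProductSpace ℝ E]
    [FiniteDimensional ℝ E]
    (Astar : E → ℝ)
    (Λ : E → E) (hgrad : ∀ x, HasGradientAt Astar (Λ x) x)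
    (η : E) (g : ℕ → E) (β : ℕ → ℝ) (hβ : ∀ t, 1 ≤ t → 0 < β t)
    (μ : ℕ → E) (hμ1 : Λ (μ 1) = η)
    (hmax : ∀ t, 1 ≤ t →
      IsMaxOn (fun m => ⟪m, g t + η - Λ (μ t)⟫ -
          (1 / β t) * (Astar m - Astar (μ t) - ⟪m - μ t, Λ (μ t)⟫))
        Set.univ (μ (t + 1)))
    (lamTilde : ℕ → E) (h0 : lamTilde 0 = 0)
    (hTildeRec : ∀ t, 1 ≤ t →
      lamTilde t = (1 - β t) • lamTilde (t - 1) + (β t) • g t) :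
    ∀ t, 1 ≤ t → Λ (μ (t + 1)) = lamTilde t + η :=
  eq_add_of_relaxation (u := fun t => Λ (μ t)) hμ1
    (fun t ht => dual_eq_add_smul_of_isLocalMax_mirrorStep (A := Astar) (y := μ t) (hgrad _)
      (hβ t ht).ne' ((hmax t ht).isLocalMax Filter.univ_mem))
    h0 hTildeRec

/-- Theorem 1 of the paper in natural-parameter coordinates:
if each `μ_{t+1}` is a global maximizer of the mirror-descent objective
`μ ↦ ⟨μ, g_t + η − Λ(μ_t)⟩ − (1/β_t) B_{A*}(μ‖μ_t)`, then
`Λ(μ_{t+1}) = λ̃_t + η` where `λ̃_t` follows the convex-combination recursion. -/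
theorem cvi_mirror_steps_natural_params
    {E : Type*} [NormedAddCommGroup E] [InnerProductSpace ℝ E]
    [FiniteDimensional ℝ E]
    (Astar : E → ℝ) (hconv : ConvexOn ℝ Set.univ Astar)
    (Λ : E → E) (hgrad : ∀ x, HasGradientAt Astar (Λ x) x)
    (η : E) (g : ℕ → E) (β : ℕ → ℝ) (hβ : ∀ t, 1 ≤ t → 0 < β t)
    (μ : ℕ → E) (hμ1 : Λ (μ 1) = η)
    (hmax : ∀ t, 1 ≤ t →
      IsMaxOn (fun m => ⟪m, g t + η - Λ (μ t)⟫ -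
          (1 / β t) * (Astar m - Astar (μ t) - ⟪m - μ t, Λ (μ t)⟫))
        Set.univ (μ (t + 1)))
    (lamTilde : ℕ → E) (h0 : lamTilde 0 = 0)
    (hTildeRec : ∀ t, 1 ≤ t →
      lamTilde t = (1 - β t) • lamTilde (t - 1) + (β t) • g t) :
    ∀ t, 1 ≤ t → Λ (μ (t + 1)) = lamTilde t + η :=
  cvi_mirror_steps_natural_params_general Astar Λ hgrad η g β hβ μ hμ1 hmax lamTilde h0 hTildeRec
end

section
/- Let (Z, 𝒜, ν) be a σ-finite measure space with ν ≠ 0, let d ≥ 1, and let φ : Z → ℝ^d be measurable. For λ ∈ ℝ^d define Z(λ) := ∫ exp⟨φ(z), λ⟩ dν(z), and when Z(λ) < ∞ set A(λ) := log Z(λ) and q_λ(z) := exp(⟨φ(z), λ⟩ − A(λ)). Fix η, g ∈ ℝ^d, β ∈ (0, 1], and λ_t ∈ ℝ^d with 0 < Z(λ_t) < ∞; define ξ := β (g + η) + (1 − β) λ_t and assume 0 < Z(ξ) < ∞. Then for every λ ∈ ℝ^d such that 0 < Z(λ) < ∞ and z ↦ ‖φ(z)‖ exp⟨φ(z), λ⟩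 is ν-integrable, writing μ(λ) := ∫ φ(z) q_λ(z) dν(z), one has β ⟨μ(λ), g⟩ + β ∫ q_λ(z)(⟨φ(z), η⟩ − log q_λ(z)) dν(z) − (1 − β) ∫ q_λ(z)(log q_λ(z) − log q_{λ_t}(z)) dν(z) ≤ A(ξ) − (1 − β) A(λ_t), with equality when λ = ξ. -/
open MeasureTheory RealInnerProductSpace

/-- The partition function `Z(λ) = ∫ exp⟨φ(z), λ⟩ dν(z)`. -/
noncomputable def partZ {Z : Type*} [MeasurableSpace Z] (ν : Measure Z) {d : ℕ}
    (φ : Z → EuclideanSpace ℝ (Fin d)) (l : EuclideanSpace ℝ (Fin d)) : ℝ :=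
  ∫ z, Real.exp ⟪φ z, l⟫ ∂ν

/-- The log-partition function `A(λ) = log Z(λ)`. -/
noncomputable def logPart {Z : Type*} [MeasurableSpace Z] (ν : Measure Z) {d : ℕ}
    (φ : Z → EuclideanSpace ℝ (Fin d)) (l : EuclideanSpace ℝ (Fin d)) : ℝ :=
  Real.log (partZ ν φ l)

/-- The exponential-family density `q_λ(z) = exp(⟨φ(z), λ⟩ − A(λ))`. -/
noncomputable def expDens {Z : Type*} [MeasurableSpace Z] (ν : Measure Z) {d : ℕ}
    (φ : Z → EuclideanSpace ℝ (Fin d)) (l : EuclideanSpace ℝ (Fin d)) (z : Z) : ℝ :=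
  Real.exp (⟪φ z, l⟫ - logPart ν φ l)

/-!
The objective is affine in the sufficient statistic: since `log q_λ = ⟨φ, λ⟩ − A(λ)`, it equals
`⟨μ(λ), ξ − λ⟩ + A(λ) − (1 − β) A(λ_t)`. The bound is then the supporting-hyperplane inequality
`A(λ) + ⟨μ(λ), ξ − λ⟩ ≤ A(ξ)` for the log-partition function, which is Gibbs' inequality
`KL(q_λ ‖ q_ξ) ≥ 0`, obtained by integrating `x ≤ eˣ − 1` against `q_λ`.
-/

noncomputable def meanParam {Z : Type*} [MeasurableSpace Z] (ν : Measure Z) {d : ℕ}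
    (φ : Z → EuclideanSpace ℝ (Fin d)) (l : EuclideanSpace ℝ (Fin d)) :
    EuclideanSpace ℝ (Fin d) :=
  ∫ z, expDens ν φ l z • φ z ∂ν

section ExpFamily

variable {Z : Type*} [MeasurableSpace Z] {ν : Measure Z} {d : ℕ}
  {φ : Z → EuclideanSpace ℝ (Fin d)} {l : EuclideanSpace ℝ (Fin d)}

lemma expDens_eq_exp_mul (l : EuclideanSpace ℝ (Fin d)) (z : Z) :
    expDens ν φ l z = Real.exp (-logPart ν φ l) * Real.exp ⟪φ z, l⟫ := by
  rw [expDens, ← Real.exp_add, neg_add_eq_sub]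

lemma log_expDens (l : EuclideanSpace ℝ (Fin d)) (z : Z) :
    Real.log (expDens ν φ l z) = ⟪φ z, l⟫ - logPart ν φ l :=
  Real.log_exp _

lemma integrable_expDens (hInt : Integrable (fun z => Real.exp ⟪φ z, l⟫) ν) :
    Integrable (expDens ν φ l) ν :=
  (hInt.const_mul _).congr (.of_forall fun z => (expDens_eq_exp_mul l z).symm)

lemma integral_expDens (hpos : 0 < partZ ν φ l) :
    ∫ z, expDens ν φ l z ∂ν = 1 := by
  simp only [expDens_eq_exp_mul]
  rw [integral_const_mul, ← partZ, Real.exp_neg, logPart, Real.exp_log hpos,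
    inv_mul_cancel₀ hpos.ne']

lemma integrable_expDens_smul (hφ : Measurable φ)
    (hIntφ : Integrable (fun z => ‖φ z‖ * Real.exp ⟪φ z, l⟫) ν) :
    Integrable (fun z => expDens ν φ l z • φ z) ν := by
  have hmeas : Measurable (fun z => expDens ν φ l z • φ z) :=
    (((hφ.inner measurable_const).sub measurable_const).exp).smul hφ
  refine (integrable_norm_iff hmeas.aestronglyMeasurable).mp ?_
  convert hIntφ.const_mul (Real.exp (-logPart ν φ l)) using 2 with z
  rw [norm_smul, Real.norm_of_nonneg (r := expDens ν φ l z) (Real.exp_pos _).le,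
    expDens_eq_exp_mul]
  ring

lemma integrable_expDens_mul_inner_add (hφ : Measurable φ)
    (hInt : Integrable (fun z => Real.exp ⟪φ z, l⟫) ν)
    (hIntφ : Integrable (fun z => ‖φ z‖ * Real.exp ⟪φ z, l⟫) ν)
    (c : EuclideanSpace ℝ (Fin d)) (a : ℝ) :
    Integrable (fun z => expDens ν φ l z * (⟪φ z, c⟫ + a)) ν := by
  refine (((integrable_expDens_smul hφ hIntφ).inner_const c).add
    ((integrable_expDens hInt).mul_const a)).congr (.of_forall fun z => ?_)
  rw [Pi.add_apply, real_inner_smul_left, ← mul_add]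

lemma integral_expDens_mul_inner_add (hφ : Measurable φ)
    (hInt : Integrable (fun z => Real.exp ⟪φ z, l⟫) ν) (hpos : 0 < partZ ν φ l)
    (hIntφ : Integrable (fun z => ‖φ z‖ * Real.exp ⟪φ z, l⟫) ν)
    (c : EuclideanSpace ℝ (Fin d)) (a : ℝ) :
    ∫ z, expDens ν φ l z * (⟪φ z, c⟫ + a) ∂ν = ⟪meanParam ν φ l, c⟫ + a := by
  have hsmul := integrable_expDens_smul hφ hIntφ
  have hsplit : ∀ z, expDens ν φ l z * (⟪φ z, c⟫ + a) =
      ⟪c, expDens ν φ l z • φ z⟫ + a * expDens ν φ l z := by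
    intro z
    rw [real_inner_smul_right, real_inner_comm c]
    ring
  simp only [hsplit]
  rw [integral_add (hsmul.const_inner c) ((integrable_expDens hInt).const_mul a),
    integral_inner hsmul, integral_const_mul, integral_expDens hpos, real_inner_comm,
    meanParam, mul_one]

lemma logPart_add_inner_meanParam_le (hφ : Measurable φ)
    (hInt : Integrable (fun z => Real.exp ⟪φ z, l⟫) ν) (hpos : 0 < partZ ν φ l)
    (hIntφ : Integrable (fun z => ‖φ z‖ * Real.exp ⟪φ z, l⟫) ν)
    {ξ : EuclideanSpace ℝ (Fin d)}
    (hIntξ : Integrable (fun z => Real.exp ⟪φ z, ξ⟫) ν) (hposξ : 0 < partZ ν φ ξ) :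
    logPart ν φ l + ⟪meanParam ν φ l, ξ - l⟫ ≤ logPart ν φ ξ := by
  have hratio : ∀ z,
      expDens ν φ l z * Real.exp (⟪φ z, ξ - l⟫ + (logPart ν φ l - logPart ν φ ξ)) =
        expDens ν φ ξ z := by
    intro z
    rw [expDens, expDens, ← Real.exp_add, inner_sub_right]
    ring_nf
  have hpointwise : ∀ z,
      expDens ν φ l z * (⟪φ z, ξ - l⟫ + (logPart ν φ l - logPart ν φ ξ)) ≤
        expDens ν φ ξ z - expDens ν φ l z := by
    intro z
    rw [← hratio z, ← mul_sub_one]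
    exact mul_le_mul_of_nonneg_left (le_sub_iff_add_le.mpr (Real.add_one_le_exp _))
      (Real.exp_pos _).le
  have hintegral := calc
    ⟪meanParam ν φ l, ξ - l⟫ + (logPart ν φ l - logPart ν φ ξ)
      = ∫ z, expDens ν φ l z * (⟪φ z, ξ - l⟫ + (logPart ν φ l - logPart ν φ ξ)) ∂ν :=
        (integral_expDens_mul_inner_add hφ hInt hpos hIntφ _ _).symm
    _ ≤ ∫ z, (expDens ν φ ξ z - expDens ν φ l z) ∂ν :=
        integral_mono (integrable_expDens_mul_inner_add hφ hInt hIntφ _ _)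
          ((integrable_expDens hIntξ).sub (integrable_expDens hInt)) hpointwise
    _ = 0 := by
        rw [integral_sub (integrable_expDens hIntξ) (integrable_expDens hInt),
          integral_expDens hposξ, integral_expDens hpos, sub_self]
  linarith

lemma mirror_objective_eq (hφ : Measurable φ)
    (hInt : Integrable (fun z => Real.exp ⟪φ z, l⟫) ν) (hpos : 0 < partZ ν φ l)
    (hIntφ : Integrable (fun z => ‖φ z‖ * Real.exp ⟪φ z, l⟫) ν)
    (η g lamt : EuclideanSpace ℝ (Fin d)) (β : ℝ) :
    β * ⟪meanParam ν φ l, g⟫ +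
        β * (∫ z, expDens ν φ l z * (⟪φ z, η⟫ - Real.log (expDens ν φ l z)) ∂ν) -
        (1 - β) * (∫ z, expDens ν φ l z *
          (Real.log (expDens ν φ l z) - Real.log (expDens ν φ lamt z)) ∂ν) =
      ⟪meanParam ν φ l, β • (g + η) + (1 - β) • lamt - l⟫ + logPart ν φ l -
        (1 - β) * logPart ν φ lamt := by
  have hcross : (fun z => expDens ν φ l z * (⟪φ z, η⟫ - Real.log (expDens ν φ l z))) =
      fun z => expDens ν φ l z * (⟪φ z, η - l⟫ + logPart ν φ l) := by
    funext z
    rw [log_expDens, inner_sub_right]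
    ring
  have hkl : (fun z => expDens ν φ l z *
        (Real.log (expDens ν φ l z) - Real.log (expDens ν φ lamt z))) =
      fun z => expDens ν φ l z * (⟪φ z, l - lamt⟫ + (logPart ν φ lamt - logPart ν φ l)) := by
    funext z
    rw [log_expDens, log_expDens, inner_sub_right]
    ring
  rw [hcross, hkl, integral_expDens_mul_inner_add hφ hInt hpos hIntφ,
    integral_expDens_mul_inner_add hφ hInt hpos hIntφ]
  simp only [inner_add_right, inner_sub_right, real_inner_smul_right]
  ring

end ExpFamily

theorem mirror_step_objective_max_general
    {Z : Type*} [MeasurableSpace Z] (ν : Measure Z)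
    (d : ℕ)
    (φ : Z → EuclideanSpace ℝ (Fin d)) (hφ : Measurable φ)
    (η g : EuclideanSpace ℝ (Fin d)) (β : ℝ)
    (lamt : EuclideanSpace ℝ (Fin d))
    (ξ : EuclideanSpace ℝ (Fin d)) (hξ : ξ = β • (g + η) + (1 - β) • lamt)
    (hIntξ : Integrable (fun z => Real.exp ⟪φ z, ξ⟫) ν)
    (hposξ : 0 < partZ ν φ ξ) :
    (∀ lam : EuclideanSpace ℝ (Fin d),
        Integrable (fun z => Real.exp ⟪φ z, lam⟫) ν →
        0 < partZ ν φ lam →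
        Integrable (fun z => ‖φ z‖ * Real.exp ⟪φ z, lam⟫) ν →
        β * ⟪∫ z, expDens ν φ lam z • φ z ∂ν, g⟫ +
          β * (∫ z, expDens ν φ lam z *
              (⟪φ z, η⟫ - Real.log (expDens ν φ lam z)) ∂ν) -
          (1 - β) * (∫ z, expDens ν φ lam z *
              (Real.log (expDens ν φ lam z) - Real.log (expDens ν φ lamt z)) ∂ν) ≤
        logPart ν φ ξ - (1 - β) * logPart ν φ lamt) ∧
    (Integrable (fun z => ‖φ z‖ * Real.exp ⟪φ z, ξ⟫) ν →
        β * ⟪∫ z, expDens ν φ ξ z • φ z ∂ν, g⟫ +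
          β * (∫ z, expDens ν φ ξ z *
              (⟪φ z, η⟫ - Real.log (expDens ν φ ξ z)) ∂ν) -
          (1 - β) * (∫ z, expDens ν φ ξ z *
              (Real.log (expDens ν φ ξ z) - Real.log (expDens ν φ lamt z)) ∂ν) =
        logPart ν φ ξ - (1 - β) * logPart ν φ lamt) := by
  refine ⟨fun lam hInt hpos hIntφ => ?_, fun hIntφ => ?_⟩
  · rw [← meanParam, mirror_objective_eq hφ hInt hpos hIntφ, ← hξ]
    linarith [logPart_add_inner_meanParam_le hφ hInt hpos hIntφ hIntξ hposξ]
  · rw [← meanParam, mirror_objective_eq hφ hIntξ hposξ hIntφ, ← hξ, sub_self, inner_zero_right]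
    ring

/-- Lemma 3: the (β-scaled) mirror-descent objective is maximized
over the exponential family exactly at `ξ = β(g + η) + (1 − β)λ_t`. -/
theorem mirror_step_objective_max
    {Z : Type*} [MeasurableSpace Z] (ν : Measure Z) [SigmaFinite ν] (hν : ν ≠ 0)
    (d : ℕ) (hd : 1 ≤ d)
    (φ : Z → EuclideanSpace ℝ (Fin d)) (hφ : Measurable φ)
    (η g : EuclideanSpace ℝ (Fin d)) (β : ℝ) (hβ0 : 0 < β) (hβ1 : β ≤ 1)
    (lamt : EuclideanSpace ℝ (Fin d))
    (hIntT : Integrable (fun z => Real.exp ⟪φ z, lamt⟫) ν)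
    (hposT : 0 < partZ ν φ lamt)
    (ξ : EuclideanSpace ℝ (Fin d)) (hξ : ξ = β • (g + η) + (1 - β) • lamt)
    (hIntξ : Integrable (fun z => Real.exp ⟪φ z, ξ⟫) ν)
    (hposξ : 0 < partZ ν φ ξ) :
    (∀ lam : EuclideanSpace ℝ (Fin d),
        Integrable (fun z => Real.exp ⟪φ z, lam⟫) ν →
        0 < partZ ν φ lam →
        Integrable (fun z => ‖φ z‖ * Real.exp ⟪φ z, lam⟫) ν →
        β * ⟪∫ z, expDens ν φ lam z • φ z ∂ν, g⟫ +
          β * (∫ z, expDens ν φ lam z *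
              (⟪φ z, η⟫ - Real.log (expDens ν φ lam z)) ∂ν) -
          (1 - β) * (∫ z, expDens ν φ lam z *
              (Real.log (expDens ν φ lam z) - Real.log (expDens ν φ lamt z)) ∂ν) ≤
        logPart ν φ ξ - (1 - β) * logPart ν φ lamt) ∧
    (Integrable (fun z => ‖φ z‖ * Real.exp ⟪φ z, ξ⟫) ν →
        β * ⟪∫ z, expDens ν φ ξ z • φ z ∂ν, g⟫ +
          β * (∫ z, expDens ν φ ξ z *
              (⟪φ z, η⟫ - Real.log (expDens ν φ ξ z)) ∂ν) -
          (1 - β) * (∫ z, expDens ν φ ξ z *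
              (Real.log (expDens ν φ ξ z) - Real.log (expDens ν φ lamt z)) ∂ν) =
        logPart ν φ ξ - (1 - β) * logPart ν φ lamt) :=
  mirror_step_objective_max_general ν d φ hφ η g β lamt ξ hξ hIntξ hposξ
end
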